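/- arXiv:2211.00984 — 6 statements merged into one kernel-verified Lean document; each statement's English description precedes it below -/
import Mathlib

section
/- Let V be a real Hilbert space, a : V × V → ℝ a continuous symmetric bilinear form that is T-coercive (there exists bounded linear T : V → V and α > 0 with |a(v,Tv)| ≥ α‖v‖² for all v). Then for every continuous linear functional f on V there exists a unique u ∈ V such that a(u,v) = f(v) for all v ∈ V. -/
/-!
Through the Riesz map, `a` becomes a self-adjoint operator `A` with `⟪A u, v⟫ = a u v`.
T-coercivity gives `α ‖v‖² ≤ |⟪A v, T v⟫| ≤ ‖T‖ ‖v‖ ‖A v‖`, so `A` is bounded below, hence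
injective with closed range; for a self-adjoint operator the orthogonal complement of the range
is the kernel, so `A` is also surjective. The solution is `A⁻¹` applied to the Riesz
representative of `f`.
-/

open InnerProductSpace

theorem ContinuousLinearMap.norm_le_of_tCoercive {E F : Type*} [NormedAddCommGroup E]
    [NormedSpace ℝ E] [SeminormedAddCommGroup F] [NormedSpace ℝ F]
    (a : E →L[ℝ] F →L[ℝ] ℝ) (T : E →L[ℝ] F) {α : ℝ} (hα : 0 < α)
    (hT : ∀ v, α * ‖v‖ ^ 2 ≤ |a v (T v)|) (v : E) :
    ‖v‖ ≤ ‖T‖ / α * ‖a v‖ := by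
  rcases eq_or_ne v 0 with rfl | hv
  · simp
  have hv_pos : 0 < ‖v‖ := norm_pos_iff.mpr hv
  have : α * ‖v‖ * ‖v‖ ≤ ‖T‖ * ‖a v‖ * ‖v‖ :=
    calc α * ‖v‖ * ‖v‖ = α * ‖v‖ ^ 2 := by ring
      _ ≤ |a v (T v)| := hT v
      _ ≤ ‖a v‖ * ‖T v‖ := (a v).le_opNorm (T v)
      _ ≤ ‖a v‖ * (‖T‖ * ‖v‖) := by gcongr; exact T.le_opNorm v
      _ = ‖T‖ * ‖a v‖ * ‖v‖ := by ring
  rw [div_mul_eq_mul_div, le_div_iff₀ hα, mul_comm]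
  exact le_of_mul_le_mul_right this hv_pos

namespace InnerProductSpace

variable {𝕜 E : Type*} [RCLike 𝕜] [NormedAddCommGroup E] [InnerProductSpace 𝕜 E]
  [CompleteSpace E]

local postfix:1024 "♯" => continuousLinearMapOfBilin

theorem norm_continuousLinearMapOfBilin_apply (B : E →L⋆[𝕜] E →L[𝕜] 𝕜) (v : E) :
    ‖B♯ v‖ = ‖B v‖ :=
  (toDual 𝕜 E).symm.norm_map (B v)

theorem isSymmetric_continuousLinearMapOfBilin {B : E →L⋆[𝕜] E →L[𝕜] 𝕜}
    (hB : ∀ v w, starRingEnd 𝕜 (B w v) = B v w) : (B♯ : E →ₗ[𝕜] E).IsSymmetric := by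
  intro v w
  rw [ContinuousLinearMap.coe_coe, continuousLinearMapOfBilin_apply, ← inner_conj_symm,
    continuousLinearMapOfBilin_apply, hB]

end InnerProductSpace

theorem LinearMap.IsSymmetric.surjective_of_antilipschitz {𝕜 E : Type*} [RCLike 𝕜]
    [NormedAddCommGroup E] [InnerProductSpace 𝕜 E] [CompleteSpace E] {A : E →L[𝕜] E}
    (hA : (A : E →ₗ[𝕜] E).IsSymmetric) {K : NNReal} (hK : AntilipschitzWith K A) :
    Function.Surjective A := by
  have hclosed : IsClosed (LinearMap.range (A : E →ₗ[𝕜] E) : Set E) := by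
    rw [LinearMap.coe_range, ContinuousLinearMap.coe_coe]
    exact hK.isClosed_range A.uniformContinuous
  have : CompleteSpace (LinearMap.range (A : E →ₗ[𝕜] E)) := hclosed.completeSpace_coe
  have hker : LinearMap.ker (A : E →ₗ[𝕜] E) = ⊥ := LinearMap.ker_eq_bot.mpr hK.injective
  rw [← ContinuousLinearMap.coe_coe, ← LinearMap.range_eq_top, ← Submodule.orthogonal_eq_bot_iff,
    hA.orthogonal_range, hker]

/-- Well-posedness via T-coercivity: a continuous symmetric T-coercive bilinear form on a
real Hilbert space induces a well-posed variational problem. -/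
theorem stmt_1 {V : Type*} [NormedAddCommGroup V] [InnerProductSpace ℝ V] [CompleteSpace V]
    (a : V →L[ℝ] V →L[ℝ] ℝ) (hsym : ∀ u v : V, a u v = a v u)
    (T : V →L[ℝ] V) (α : ℝ) (hα : 0 < α)
    (hT : ∀ v : V, α * ‖v‖ ^ 2 ≤ |a v (T v)|) :
    ∀ f : V →L[ℝ] ℝ, ∃! u : V, ∀ v : V, a u v = f v := by
  intro f
  set A := continuousLinearMapOfBilin (𝕜 := ℝ) a
  have hA_anti : AntilipschitzWith ⟨‖T‖ / α, div_nonneg (norm_nonneg T) hα.le⟩ A :=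
    A.antilipschitz_of_bound fun v ↦ by
      rw [norm_continuousLinearMapOfBilin_apply]
      exact a.norm_le_of_tCoercive T hα hT v
  have hA_symm : (A : V →ₗ[ℝ] V).IsSymmetric :=
    isSymmetric_continuousLinearMapOfBilin fun v w ↦ by simpa using hsym w v
  have hA_bij : Function.Bijective A :=
    ⟨hA_anti.injective, hA_symm.surjective_of_antilipschitz hA_anti⟩
  have hsolves (u : V) : (∀ v, a u v = f v) ↔ A u = (toDual ℝ V).symm f := by
    rw [LinearIsometryEquiv.eq_symm_apply, ContinuousLinearMap.ext_iff]
    simp only [A, toDual_apply_apply, continuousLinearMapOfBilin_apply]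
  simpa only [hsolves] using hA_bij.existsUnique ((toDual ℝ V).symm f)
end

section
/- Let V, W be real Hilbert spaces, a : V × W → ℝ continuous bilinear, and T : V → W a bounded bijective linear operator with |a(v, Tv)| ≥ α‖v‖_V² for all v ∈ V and some α > 0. Then a satisfies both: (1) inf over u≠0 of sup over w≠0 of |a(u,w)|/(‖u‖‖w‖) > 0, and (2) for each w ∈ W with w ≠ 0 there exists v ∈ V with a(v,w) ≠ 0. -/
/-- T-coercivity (with a bijective operator T ∈ L(V,W)) implies the two
Banach–Nečas–Babuška conditions: stability and solvability. -/
theorem stmt_2 {V W : Type*} [NormedAddCommGroup V] [InnerProductSpace ℝ V] [CompleteSpace V]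
    [NormedAddCommGroup W] [InnerProductSpace ℝ W] [CompleteSpace W]
    (a : V →L[ℝ] W →L[ℝ] ℝ) (T : V →L[ℝ] W) (hTbij : Function.Bijective T)
    (α : ℝ) (hα : 0 < α) (hT : ∀ v : V, α * ‖v‖ ^ 2 ≤ |a v (T v)|) :
    (∃ γ > 0, ∀ u : V, u ≠ 0 →
        γ ≤ ⨆ w : {w : W // w ≠ 0}, |a u w.1| / (‖u‖ * ‖w.1‖)) ∧
    (∀ w : W, w ≠ 0 → ∃ v : V, a v w ≠ 0) := by
  constructor
  · refine ⟨α / (‖T‖ + 1), div_pos hα (by positivity), fun u hu => ?_⟩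
    have hTu : T u ≠ 0 := fun h => hu (hTbij.1 (by simpa using h))
    have hune : (0:ℝ) < ‖u‖ := norm_pos_iff.mpr hu
    have hTune : (0:ℝ) < ‖T u‖ := norm_pos_iff.mpr hTu
    have key : α / (‖T‖ + 1) ≤ |a u (T u)| / (‖u‖ * ‖T u‖) := by
      rw [div_le_div_iff₀ (by positivity) (by positivity)]
      calc α * (‖u‖ * ‖T u‖) ≤ α * (‖u‖ * ((‖T‖ + 1) * ‖u‖)) := by
            have : ‖T u‖ ≤ (‖T‖ + 1) * ‖u‖ := le_trans (T.le_opNorm u)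
              (by nlinarith [norm_nonneg u])
            gcongr
        _ = (α * ‖u‖ ^ 2) * (‖T‖ + 1) := by ring
        _ ≤ |a u (T u)| * (‖T‖ + 1) := by
            have := hT u; nlinarith [norm_nonneg T]
    refine le_trans key (le_ciSup_of_le ?_ ⟨T u, hTu⟩ le_rfl)
    · refine ⟨‖a‖, fun x hx => ?_⟩
      obtain ⟨⟨w, hw⟩, rfl⟩ := hx
      have hwpos : (0:ℝ) < ‖w‖ := norm_pos_iff.mpr hw
      rw [div_le_iff₀ (by positivity)]
      calc |a u w| ≤ ‖a u‖ * ‖w‖ := (a u).le_opNorm w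
        _ ≤ ‖a‖ * ‖u‖ * ‖w‖ := by
            have := a.le_opNorm u
            nlinarith [norm_nonneg w]
        _ = ‖a‖ * (‖u‖ * ‖w‖) := by ring
  · intro w hw
    obtain ⟨v, rfl⟩ := hTbij.2 w
    have hv : v ≠ 0 := fun h => hw (by simp [h])
    refine ⟨v, fun h => ?_⟩
    have := hT v
    rw [h] at this
    simp only [abs_zero] at this
    have hvpos : (0:ℝ) < ‖v‖ := norm_pos_iff.mpr hv
    have : (0:ℝ) < α * ‖v‖ ^ 2 := by positivity
    linarith
end

section
/- Let H be a real Hilbert space, ν > 0, C > 0, and suppose for every p in a Hilbert space Q there exists v_p ∈ H with a linear map p ↦ v_p satisfying b(v_p, q) = ν⁻¹(p,q)_Q for all q ∈ Q and ‖v_p‖_H ≤ (C/ν)‖p‖_Q, where b : H × Q → ℝ is a continuous bilinear form. Define on X = H × Q the bilinear form a((u,p),(v,q)) = ν(u,v)_H − b(v,p) − b(u,q). Then with T(u,p) = (C² u − v_p, −C² p), one has a((u,p), T(u,p)) ≥ (ν/2)·(1/2)min(C²,1)·(‖u‖_H + ν⁻¹‖p‖_Q)² for all (u,p) ∈ X.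 -/
open scoped RealInnerProductSpace

/-- Abstract T-coercivity estimate for the Stokes saddle-point form:
with `T(u,p) = (C² u − v_p, −C² p)` one has
`a((u,p), T(u,p)) ≥ (ν/2)·(1/2)min(C²,1)·(‖u‖ + ν⁻¹‖p‖)²`. -/
theorem stmt_3 {H Q : Type*} [NormedAddCommGroup H] [InnerProductSpace ℝ H] [CompleteSpace H]
    [NormedAddCommGroup Q] [InnerProductSpace ℝ Q] [CompleteSpace Q]
    (ν C : ℝ) (hν : 0 < ν) (hC : 0 < C)
    (b : H →L[ℝ] Q →L[ℝ] ℝ) (vmap : Q →ₗ[ℝ] H)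
    (hb : ∀ p q : Q, b (vmap p) q = ν⁻¹ * ⟪p, q⟫)
    (hbound : ∀ p : Q, ‖vmap p‖ ≤ (C / ν) * ‖p‖) :
    ∀ (u : H) (p : Q),
      ν * ⟪u, C ^ 2 • u - vmap p⟫ - b (C ^ 2 • u - vmap p) p - b u ((-(C ^ 2)) • p) ≥
        (ν / 2) * ((1 / 2) * min (C ^ 2) 1) * (‖u‖ + ν⁻¹ * ‖p‖) ^ 2 := by
  intro u p
  have h1 : ⟪u, C ^ 2 • u - vmap p⟫ = C ^ 2 * ⟪u, u⟫ - ⟪u, vmap p⟫ := by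
    rw [inner_sub_right, real_inner_smul_right]
  have h2 : b (C ^ 2 • u - vmap p) p = C ^ 2 * b u p - ν⁻¹ * ⟪p, p⟫ := by
    rw [map_sub, map_smul]
    simp [ContinuousLinearMap.sub_apply, ContinuousLinearMap.smul_apply, hb p p]
  have h3 : b u ((-(C ^ 2)) • p) = -(C ^ 2) * b u p := by
    rw [(b u).map_smul]; simp
  rw [h1, h2, h3, real_inner_self_eq_norm_sq, real_inner_self_eq_norm_sq]
  have hip : ⟪u, vmap p⟫ ≤ ‖u‖ * ((C / ν) * ‖p‖) := by
    calc ⟪u, vmap p⟫ ≤ ‖u‖ * ‖vmap p‖ := real_inner_le_norm u (vmap p)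
      _ ≤ ‖u‖ * ((C / ν) * ‖p‖) := by
          exact mul_le_mul_of_nonneg_left (hbound p) (norm_nonneg u)
  have hm1 : min (C ^ 2) 1 ≤ C ^ 2 := min_le_left _ _
  have hm2 : min (C ^ 2) 1 ≤ 1 := min_le_right _ _
  have hu := norm_nonneg u
  have hp := norm_nonneg p
  have hνi : (0:ℝ) < ν⁻¹ := inv_pos.mpr hν
  set x := ‖u‖ with hx
  set w := ν⁻¹ * ‖p‖ with hw
  have hp2 : ν⁻¹ * ‖p‖ ^ 2 = ν * w ^ 2 := by
    rw [hw]; field_simp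
  have h4 : ν * ⟪u, vmap p⟫ ≤ ν * (C * x * w) := by
    have := mul_le_mul_of_nonneg_left hip hν.le
    calc ν * ⟪u, vmap p⟫ ≤ ν * (‖u‖ * ((C / ν) * ‖p‖)) := this
      _ = ν * (C * x * w) := by rw [hx, hw]; field_simp
  have key2 : C ^ 2 * x ^ 2 - C * x * w + w ^ 2 ≥
      (1 / 2 * min (C ^ 2) 1) / 2 * (x + w) ^ 2 := by
    have hm0 : (0:ℝ) ≤ min (C ^ 2) 1 := le_min (sq_nonneg C) zero_le_one
    nlinarith [sq_nonneg (C * x - w),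
      mul_nonneg hm0 (sq_nonneg (x - w)),
      mul_nonneg (sub_nonneg.mpr hm1) (sq_nonneg x),
      mul_nonneg (sub_nonneg.mpr hm2) (sq_nonneg w)]
  have key3 := mul_le_mul_of_nonneg_left key2 hν.le
  nlinarith [key3, h4, hp2]
end

section
/- Under the hypotheses of the abstract Stokes T-coercivity setup (b continuous bilinear on H × Q, right inverse p ↦ v_p with b(v_p,q) = ν⁻¹(p,q)_Q and ‖v_p‖ ≤ (C/ν)‖p‖), the operator T(u,p) = (C² u − v_p, −C² p) is linear, injective, and satisfies ‖T(u,p)‖_X ≤ C(1+C)·‖(u,p)‖_X where ‖(v,q)‖_X = ‖v‖_H + ν⁻¹‖q‖_Q. -/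
open scoped RealInnerProductSpace

/-! `T(u,p) = 0` forces first `p = 0` and then `C² • u = 0`. For the bound, the triangle
inequality and `‖v_p‖ ≤ (C/ν)‖p‖` give `‖T(u,p)‖_X ≤ C²‖u‖ + (C + C²)ν⁻¹‖p‖`, which is below
`C(1+C)(‖u‖ + ν⁻¹‖p‖)` by exactly `C‖u‖`. -/

section Algebra

variable {R M N : Type*} [CommRing R] [AddCommGroup M] [Module R M] [AddCommGroup N] [Module R N]

def tCoercivityMap (c : R) (L : N →ₗ[R] M) : M × N →ₗ[R] M × N :=
  (c • LinearMap.fst R M N - L ∘ₗ LinearMap.snd R M N).prod (-c • LinearMap.snd R M N)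

@[simp]
theorem tCoercivityMap_apply (c : R) (L : N →ₗ[R] M) (u : M) (p : N) :
    tCoercivityMap c L (u, p) = (c • u - L p, -c • p) :=
  rfl

theorem tCoercivityMap_injective [IsDomain R] [Module.IsTorsionFree R M]
    [Module.IsTorsionFree R N] {c : R} (hc : c ≠ 0) (L : N →ₗ[R] M) :
    Function.Injective (tCoercivityMap c L) := by
  refine (injective_iff_map_eq_zero _).mpr fun ⟨u, p⟩ h ↦ ?_
  simp only [tCoercivityMap_apply, Prod.mk_eq_zero, smul_eq_zero, neg_eq_zero, hc,
    false_or] at h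
  obtain ⟨hu, rfl⟩ := h
  simpa [hc] using hu

end Algebra

section Norm

variable {𝕜 E F : Type*} [NormedField 𝕜] [SeminormedAddCommGroup E] [NormedSpace 𝕜 E]
  [SeminormedAddCommGroup F] [NormedSpace 𝕜 F]

theorem norm_tCoercivityMap_fst_le (c : 𝕜) {L : F →ₗ[𝕜] E} {K : ℝ}
    (hL : ∀ p, ‖L p‖ ≤ K * ‖p‖) (u : E) (p : F) :
    ‖(tCoercivityMap c L (u, p)).1‖ ≤ ‖c‖ * ‖u‖ + K * ‖p‖ :=
  calc ‖c • u - L p‖ ≤ ‖c • u‖ + ‖L p‖ := norm_sub_le _ _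
    _ ≤ ‖c‖ * ‖u‖ + K * ‖p‖ := by rw [norm_smul]; gcongr; exact hL p

theorem norm_tCoercivityMap_snd (c : 𝕜) (L : F →ₗ[𝕜] E) (u : E) (p : F) :
    ‖(tCoercivityMap c L (u, p)).2‖ = ‖c‖ * ‖p‖ := by
  simp [norm_smul]

end Norm

theorem stmt_4_general {H Q : Type*} [NormedAddCommGroup H] [InnerProductSpace ℝ H]
    [NormedAddCommGroup Q] [InnerProductSpace ℝ Q]
    (ν C : ℝ) (hC : 0 < C)
    (vmap : Q →ₗ[ℝ] H)
    (hbound : ∀ p : Q, ‖vmap p‖ ≤ (C / ν) * ‖p‖)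
    (T : H × Q → H × Q)
    (hTdef : ∀ u : H, ∀ p : Q, T (u, p) = (C ^ 2 • u - vmap p, (-(C ^ 2)) • p)) :
    IsLinearMap ℝ T ∧ Function.Injective T ∧
      ∀ (u : H) (p : Q),
        ‖(T (u, p)).1‖ + ν⁻¹ * ‖(T (u, p)).2‖ ≤ C * (1 + C) * (‖u‖ + ν⁻¹ * ‖p‖) := by
  have hT : T = tCoercivityMap (C ^ 2) vmap := funext fun ⟨u, p⟩ ↦ hTdef u p
  subst hT
  refine ⟨LinearMap.isLinear _, tCoercivityMap_injective (by positivity) vmap, fun u p ↦ ?_⟩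
  have hfst := norm_tCoercivityMap_fst_le (C ^ 2) hbound u p
  rw [Real.norm_of_nonneg (by positivity)] at hfst
  rw [norm_tCoercivityMap_snd, Real.norm_of_nonneg (by positivity)]
  have hCu : 0 ≤ C * ‖u‖ := by positivity
  calc _ ≤ C ^ 2 * ‖u‖ + C / ν * ‖p‖ + ν⁻¹ * (C ^ 2 * ‖p‖) := by gcongr
    _ ≤ C * (1 + C) * (‖u‖ + ν⁻¹ * ‖p‖) := by rw [div_eq_mul_inv]; linear_combination hCu

/-- The explicit T-coercivity operator `T(u,p) = (C² u − v_p, −C² p)` is linear, injective,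
and continuous with constant `C(1+C)` in the norm `‖(u,p)‖_X = ‖u‖ + ν⁻¹‖p‖`. -/
theorem stmt_4 {H Q : Type*} [NormedAddCommGroup H] [InnerProductSpace ℝ H] [CompleteSpace H]
    [NormedAddCommGroup Q] [InnerProductSpace ℝ Q] [CompleteSpace Q]
    (ν C : ℝ) (hν : 0 < ν) (hC : 0 < C)
    (b : H →L[ℝ] Q →L[ℝ] ℝ) (vmap : Q →ₗ[ℝ] H)
    (hb : ∀ p q : Q, b (vmap p) q = ν⁻¹ * ⟪p, q⟫)
    (hbound : ∀ p : Q, ‖vmap p‖ ≤ (C / ν) * ‖p‖)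
    (T : H × Q → H × Q)
    (hTdef : ∀ u : H, ∀ p : Q, T (u, p) = (C ^ 2 • u - vmap p, (-(C ^ 2)) • p)) :
    IsLinearMap ℝ T ∧ Function.Injective T ∧
      ∀ (u : H) (p : Q),
        ‖(T (u, p)).1‖ + ν⁻¹ * ‖(T (u, p)).2‖ ≤ C * (1 + C) * (‖u‖ + ν⁻¹ * ‖p‖) :=
  stmt_4_general ν C hC vmap hbound T hTdef
end

section
/- Let T be a nondegenerate triangle in ℝ² with barycentric coordinates λ₁, λ₂, λ₃, and define φ = 2 − 3(λ₁² + λ₂² + λ₃²). Then for every edge F of T and every affine function q on F, the integral of φ·q over F is zero. -/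
/-!
On the edge from `S i` to `S j` the barycentric coordinates are `1 - t` and `t` while the third
one vanishes, so `φ` restricts to `2 - 3((1 - t)² + t²) = -(6t² - 6t + 1)`, minus the degree-2
shifted Legendre polynomial on `[0, 1]`, which is orthogonal to every affine function of `t`.
-/

open intervalIntegral

theorem AffineMap.apply_smul_add_smul {V : Type*} [AddCommGroup V] [Module ℝ V]
    (f : V →ᵃ[ℝ] ℝ) (x y : V) (t : ℝ) :
    f ((1 - t) • x + t • y) = (1 - t) * f x + t * f y := by
  rw [← AffineMap.lineMap_apply_module, AffineMap.apply_lineMap, AffineMap.lineMap_apply_module,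
    smul_eq_mul, smul_eq_mul]

theorem sum_sq_apply_smul_add_smul {ι V : Type*} [Fintype ι] [DecidableEq ι] [AddCommGroup V]
    [Module ℝ V] (S : ι → V) (lam : ι → V →ᵃ[ℝ] ℝ)
    (hlam : ∀ i j, lam i (S j) = if i = j then 1 else 0) {i j : ι} (hij : i ≠ j) (t : ℝ) :
    ∑ k, (lam k ((1 - t) • S i + t • S j)) ^ 2 = (1 - t) ^ 2 + t ^ 2 := by
  rw [Fintype.sum_eq_add i j hij]
  · simp [AffineMap.apply_smul_add_smul, hlam, hij, hij.symm]
  · rintro k ⟨hki, hkj⟩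
    simp [AffineMap.apply_smul_add_smul, hlam, hki, hkj]

theorem integral_bubbleTrace_mul_affine (a b : ℝ) :
    ∫ t in (0:ℝ)..1, (2 - 3 * ((1 - t) ^ 2 + t ^ 2)) * ((1 - t) * a + t * b) = 0 := by
  have hexpand : ∀ t : ℝ, (2 - 3 * ((1 - t) ^ 2 + t ^ 2)) * ((1 - t) * a + t * b)
      = -a + (7 * a - b) * t ^ 1 + (6 * b - 12 * a) * t ^ 2 + (6 * a - 6 * b) * t ^ 3 := by
    intro t
    ring
  simp_rw [hexpand]
  rw [integral_add, integral_add, integral_add, integral_const_mul, integral_const_mul,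
    integral_const_mul]
  · simp only [integral_pow, integral_const]
    norm_num
    ring
  all_goals exact (by fun_prop : Continuous _).intervalIntegrable _ _

theorem stmt_9_general (S : Fin 3 → EuclideanSpace ℝ (Fin 2))
    (lam : Fin 3 → (EuclideanSpace ℝ (Fin 2) →ᵃ[ℝ] ℝ))
    (hlam : ∀ i j : Fin 3, lam i (S j) = if i = j then 1 else 0)
    (φ : EuclideanSpace ℝ (Fin 2) → ℝ)
    (hφ : φ = fun x => 2 - 3 * ∑ k, (lam k x) ^ 2)
    (q : EuclideanSpace ℝ (Fin 2) →ᵃ[ℝ] ℝ) :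
    ∀ i j : Fin 3, i ≠ j →
      ∫ t in (0:ℝ)..1,
        φ ((1 - t) • S i + t • S j) * q ((1 - t) • S i + t • S j) * ‖S j - S i‖ = 0 := by
  intro i j hij
  subst hφ
  simp_rw [sum_sq_apply_smul_add_smul S lam hlam hij, AffineMap.apply_smul_add_smul]
  rw [integral_mul_const, integral_bubbleTrace_mul_affine, zero_mul]

/-- The Fortin–Soulie bubble `φ = 2 − 3(λ₁² + λ₂² + λ₃²)` of a nondegenerate triangle is
`L²`-orthogonal to affine functions on each edge of the triangle. -/
theorem stmt_9 (S : Fin 3 → EuclideanSpace ℝ (Fin 2)) (hS : AffineIndependent ℝ S)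
    (lam : Fin 3 → (EuclideanSpace ℝ (Fin 2) →ᵃ[ℝ] ℝ))
    (hlam : ∀ i j : Fin 3, lam i (S j) = if i = j then 1 else 0)
    (φ : EuclideanSpace ℝ (Fin 2) → ℝ)
    (hφ : φ = fun x => 2 - 3 * ∑ k, (lam k x) ^ 2)
    (q : EuclideanSpace ℝ (Fin 2) →ᵃ[ℝ] ℝ) :
    ∀ i j : Fin 3, i ≠ j →
      ∫ t in (0:ℝ)..1,
        φ ((1 - t) • S i + t • S j) * q ((1 - t) • S i + t • S j) * ‖S j - S i‖ = 0 :=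
  stmt_9_general S lam hlam φ hφ q
end

section
/- Let K be a triangle with vertex S opposite to edge F, with outward normal vector S⃗_F of F scaled so |S⃗_F| = |F|. Let ψ_F = 1 − 2λ_S be the Crouzeix–Raviart basis function of F (λ_S the barycentric coordinate of S). Then the lowest-order Raviart–Thomas interpolant of ψ_F·e_{d'} on K is given by (Π_{RT₀}(ψ_F e_{d'}))|_K(x) = (2|K|)⁻¹ (x − S)(S⃗_F · e_{d'}). -/
/-!
On the edge `[S (m + 1), S (m + 2)]` the field `R = c • (x - S k)` has constant normal component
`c ⟪S (m + 1) - S k, n m⟫`, since the edge is orthogonal to `n m`, while `ψ` is affine, so its mean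
over the edge is the average of its values at the endpoints. For `m ≠ k` the vertex `S k` lies on
the edge and `ψ` takes the values `1` and `-1` at its ends, so both sides vanish. For `m = k` the
normal component of `x - S k` is the height of the triangle over `F`, and the identity is
`2 |K| = |F| · height`.
-/

open MeasureTheory Set
open scoped RealInnerProductSpace Pointwise

lemma volume_stdTriangle_prod :
    volume {p : ℝ × ℝ | p.1 ∈ Icc 0 1 ∧ p.2 ∈ Icc 0 (1 - p.1)} = ENNReal.ofReal (1 / 2) := by
  have hslice : ∀ x : ℝ,
      volume (Prod.mk x ⁻¹' {p : ℝ × ℝ | p.1 ∈ Icc 0 1 ∧ p.2 ∈ Icc 0 (1 - p.1)}) =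
        (Icc 0 1).indicator (fun x => ENNReal.ofReal (1 - x)) x := by
    intro x
    by_cases hx : x ∈ Icc (0 : ℝ) 1
    · rw [indicator_of_mem hx, ← sub_zero (1 - x), ← Real.volume_Icc]
      congr 1
      ext y
      simp [hx.1, hx.2]
    · rw [indicator_of_notMem hx]
      rw [mem_Icc] at hx
      simp [preimage, hx]
  rw [Measure.volume_eq_prod, Measure.prod_apply (measurableSet_region_between_cc measurable_const
    (by fun_prop) measurableSet_Icc)]
  simp_rw [hslice]
  rw [lintegral_indicator measurableSet_Icc, ← ofReal_integral_eq_lintegral_ofReal,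
    integral_Icc_eq_integral_Ioc, ← intervalIntegral.integral_of_le zero_le_one,
    intervalIntegral.integral_comp_sub_left (fun x => x)]
  · norm_num [integral_id]
  · exact (continuous_const.sub continuous_id).integrableOn_Icc
  · filter_upwards [ae_restrict_mem measurableSet_Icc] with x hx
    simpa using hx.2

lemma volume_stdTriangle :
    volume {x : EuclideanSpace ℝ (Fin 2) | x 0 ∈ Icc 0 1 ∧ x 1 ∈ Icc 0 (1 - x 0)} =
      ENNReal.ofReal (1 / 2) := by
  have hmp := (volume_preserving_piFinTwo fun _ : Fin 2 => ℝ).comp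
    (EuclideanSpace.volume_preserving_symm_measurableEquiv_toLp (Fin 2))
  exact (hmp.measure_preimage (measurableSet_region_between_cc measurable_const (by fun_prop)
    measurableSet_Icc).nullMeasurableSet).trans volume_stdTriangle_prod

lemma convexHull_zero_single_single :
    convexHull ℝ {0, EuclideanSpace.single 0 1, EuclideanSpace.single 1 1} =
      {x : EuclideanSpace ℝ (Fin 2) | x 0 ∈ Icc 0 1 ∧ x 1 ∈ Icc 0 (1 - x 0)} := by
  apply Subset.antisymm
  · refine convexHull_min ?_ ?_
    · rintro x (rfl | rfl | rfl) <;> simp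
    · intro x ⟨⟨hx0, _⟩, hx1, hxs⟩ y ⟨⟨hy0, _⟩, hy1, hys⟩ a b ha hb hab
      simp only [mem_ofPred_eq, mem_Icc, PiLp.add_apply, PiLp.smul_apply, smul_eq_mul]
      refine ⟨⟨?_, ?_⟩, ?_, ?_⟩ <;> nlinarith
  · rintro x ⟨⟨h0, _⟩, h1, hs⟩
    have hx : x = ∑ i, ![1 - x 0 - x 1, x 0, x 1] i •
        ![0, EuclideanSpace.single 0 1, EuclideanSpace.single 1 1] i := by
      ext j; fin_cases j <;> simp [Fin.sum_univ_three]
    rw [hx]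
    refine (convex_convexHull ℝ _).sum_mem (fun i _ => ?_) ?_ (fun i _ => subset_convexHull ℝ _ ?_)
    · fin_cases i <;> simp <;> linarith
    · simp [Fin.sum_univ_three]; ring
    · fin_cases i <;> simp

lemma volume_convexHull_triangle (A B C : EuclideanSpace ℝ (Fin 2)) :
    volume (convexHull ℝ {A, B, C}) =
      ENNReal.ofReal (|(B - A) 0 * (C - A) 1 - (B - A) 1 * (C - A) 0| / 2) := by
  set u := B - A
  set v := C - A
  let T : EuclideanSpace ℝ (Fin 2) →ₗ[ℝ] EuclideanSpace ℝ (Fin 2) :=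
    Matrix.toLpLin 2 2 !![u 0, v 0; u 1, v 1]
  have hdet : LinearMap.det T = u 0 * v 1 - u 1 * v 0 := by
    dsimp only [T]
    rw [Matrix.toLpLin_eq_toLin, LinearMap.det_toLin, Matrix.det_fin_two_of]
    ring
  have himage :
      {A, B, C} = A +ᵥ T '' {0, EuclideanSpace.single 0 1, EuclideanSpace.single 1 1} := by
    have hTu : T (EuclideanSpace.single 0 1) = u := by
      ext j; fin_cases j <;> simp [T, Matrix.toLpLin_apply]
    have hTv : T (EuclideanSpace.single 1 1) = v := by
      ext j; fin_cases j <;> simp [T, Matrix.toLpLin_apply]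
    simp [image_insert_eq, hTu, hTv, u, v, vadd_set_insert]
  rw [himage, convexHull_vadd, measure_vadd, ← T.image_convexHull, Measure.addHaar_image_linearMap,
    convexHull_zero_single_single, volume_stdTriangle, hdet, ← ENNReal.ofReal_mul (abs_nonneg _)]
  ring_nf

lemma abs_det_eq_norm_mul_abs_inner {u w n : EuclideanSpace ℝ (Fin 2)} (hn : ‖n‖ = 1)
    (hnw : ⟪n, w⟫ = 0) : |u 0 * w 1 - u 1 * w 0| = ‖w‖ * |⟪n, u⟫| := by
  have hinner : ∀ x y : EuclideanSpace ℝ (Fin 2), ⟪x, y⟫ = x 0 * y 0 + x 1 * y 1 := fun x y => by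
    simp [PiLp.inner_apply, Fin.sum_univ_two, mul_comm]
  have hn' : n 0 ^ 2 + n 1 ^ 2 = 1 := by
    simpa [EuclideanSpace.norm_eq, Fin.sum_univ_two] using hn
  rw [hinner] at hnw ⊢
  have hdet : u 0 * w 1 - u 1 * w 0 = (n 0 * u 0 + n 1 * u 1) * (n 0 * w 1 - n 1 * w 0) := by
    linear_combination (n 1 * u 0 - n 0 * u 1) * hnw - (u 0 * w 1 - u 1 * w 0) * hn'
  -- Lagrange's identity for `n` and `w`
  have hw : ‖w‖ = |n 0 * w 1 - n 1 * w 0| := by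
    rw [EuclideanSpace.norm_eq, ← Real.sqrt_sq_eq_abs, Fin.sum_univ_two]
    congr 1
    simp only [Real.norm_eq_abs, sq_abs]
    linear_combination (n 0 * w 0 + n 1 * w 1) * hnw - (w 0 ^ 2 + w 1 ^ 2) * hn'
  rw [hdet, hw, abs_mul, mul_comm]

lemma toReal_volume_convexHull_triangle {A B C n : EuclideanSpace ℝ (Fin 2)} (hn : ‖n‖ = 1)
    (hnBC : ⟪n, C - B⟫ = 0) :
    (volume (convexHull ℝ {A, B, C})).toReal = ‖C - B‖ * |⟪n, B - A⟫| / 2 := by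
  have hdet : (B - A) 0 * (C - A) 1 - (B - A) 1 * (C - A) 0 =
      (B - A) 0 * (C - B) 1 - (B - A) 1 * (C - B) 0 := by
    simp only [PiLp.sub_apply]; ring
  rw [volume_convexHull_triangle, ENNReal.toReal_ofReal (by positivity), hdet,
    abs_det_eq_norm_mul_abs_inner hn hnBC]

lemma range_fin_three_eq {α : Type*} (S : Fin 3 → α) (k : Fin 3) :
    range S = {S k, S (k + 1), S (k + 2)} := by
  fin_cases k <;> ext <;> simp [Fin.exists_fin_succ, eq_comm] <;> tauto

lemma inner_lineMap_sub_eq_of_inner_eq_zero {E : Type*} [NormedAddCommGroup E]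
    [InnerProductSpace ℝ E] {a b n : E} (h : ⟪b - a, n⟫ = 0) (p : E) (t : ℝ) :
    ⟪AffineMap.lineMap a b t - p, n⟫ = ⟪a - p, n⟫ := by
  rw [AffineMap.lineMap_apply_module', add_sub_assoc, inner_add_left, real_inner_smul_left, h,
    mul_zero, zero_add]

lemma intervalIntegral_apply_lineMap {E : Type*} [AddCommGroup E] [Module ℝ E]
    (f : E →ᵃ[ℝ] ℝ) (a b : E) :
    ∫ t in (0 : ℝ)..1, f (AffineMap.lineMap a b t) = (f a + f b) / 2 := by
  simp_rw [AffineMap.apply_lineMap, AffineMap.lineMap_apply_ring']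
  simp [integral_id]
  ring

lemma two_mul_toReal_volume_convexHull_range {S : Fin 3 → EuclideanSpace ℝ (Fin 2)}
    {n : EuclideanSpace ℝ (Fin 2)} {k : Fin 3} (hn : ‖n‖ = 1)
    (hperp : ⟪n, S (k + 2) - S (k + 1)⟫ = 0) (hout : 0 < ⟪n, S (k + 1) - S k⟫) :
    2 * (volume (convexHull ℝ (range S))).toReal =
      ‖S (k + 2) - S (k + 1)‖ * ⟪n, S (k + 1) - S k⟫ := by
  rw [range_fin_three_eq S k, toReal_volume_convexHull_triangle hn hperp, abs_of_pos hout]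
  ring

theorem stmt_19_general (S : Fin 3 → EuclideanSpace ℝ (Fin 2))
    (lam : Fin 3 → (EuclideanSpace ℝ (Fin 2) →ᵃ[ℝ] ℝ))
    (hlam : ∀ i j : Fin 3, lam i (S j) = if i = j then 1 else 0)
    (n : Fin 3 → EuclideanSpace ℝ (Fin 2))
    (hperp : ∀ m : Fin 3, ⟪n m, S (m + 2) - S (m + 1)⟫ = 0)
    (hunit : ∀ m : Fin 3, ‖n m‖ = 1)
    (hout : ∀ m : Fin 3, 0 < ⟪n m, S (m + 1) - S m⟫)
    (k : Fin 3)
    (SF : EuclideanSpace ℝ (Fin 2)) (hSF : SF = ‖S (k + 2) - S (k + 1)‖ • n k)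
    (area : ℝ) (harea : area = (volume (convexHull ℝ (Set.range S))).toReal)
    (e : EuclideanSpace ℝ (Fin 2))
    (ψ : EuclideanSpace ℝ (Fin 2) → ℝ) (hψ : ψ = fun x => 1 - 2 * lam k x)
    (R : EuclideanSpace ℝ (Fin 2) → EuclideanSpace ℝ (Fin 2))
    (hR : R = fun x => ((2 * area)⁻¹ * ⟪SF, e⟫) • (x - S k)) :
    ∀ m : Fin 3,
      ‖S (m + 2) - S (m + 1)‖ *
          ∫ t in (0:ℝ)..1, ⟪R ((1 - t) • S (m + 1) + t • S (m + 2)), n m⟫ =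
      ‖S (m + 2) - S (m + 1)‖ *
          ∫ t in (0:ℝ)..1, ψ ((1 - t) • S (m + 1) + t • S (m + 2)) * ⟪e, n m⟫ := by
  intro m
  have hψ_affine :
      ψ = ⇑(AffineMap.const ℝ (EuclideanSpace ℝ (Fin 2)) (1 : ℝ) - (2 : ℝ) • lam k) := by
    rw [hψ]; ext; simp
  have hedge : ⟪S (m + 2) - S (m + 1), n m⟫ = 0 := by rw [real_inner_comm, hperp]
  simp_rw [← AffineMap.lineMap_apply_module, hR, real_inner_smul_left,
    inner_lineMap_sub_eq_of_inner_eq_zero hedge, intervalIntegral.integral_const,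
    intervalIntegral.integral_mul_const, hψ_affine, intervalIntegral_apply_lineMap]
  simp only [AffineMap.coe_sub, AffineMap.coe_smul, AffineMap.coe_const, Pi.sub_apply,
    Pi.smul_apply, Function.const_apply, smul_eq_mul, hlam, sub_zero]
  by_cases hmk : m = k
  · subst hmk
    rw [harea, two_mul_toReal_volume_convexHull_range (hunit m) (hperp m) (hout m), hSF,
      real_inner_smul_left, real_inner_comm (n m), real_inner_comm e]
    rcases eq_or_ne ‖S (m + 2) - S (m + 1)‖ 0 with hw | hw
    · simp [hw]
    · simp only [left_eq_add, Fin.reduceEq, ↓reduceIte]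
      field_simp [(hout m).ne']
      ring
  · obtain rfl | rfl : k = m + 1 ∨ k = m + 2 :=
      (by decide : ∀ m k : Fin 3, m ≠ k → k = m + 1 ∨ k = m + 2) m k hmk
    · simp
      norm_num
    · have hedge' : ⟪S (m + 1) - S (m + 2), n m⟫ = 0 := by
        rw [← neg_sub, inner_neg_left, hedge, neg_zero]
      simp [hedge']
      norm_num

/-- Explicit formula for the lowest-order Raviart–Thomas interpolant of a Crouzeix–Raviart
vector basis function on a triangle: the field `x ↦ (2|K|)⁻¹ (𝒮_F·e_{d'}) (x − S)` matches
the facet-mean normal traces of `ψ_F e_{d'}` on every edge, where `ψ_F = 1 − 2λ_S`,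
`S` is the vertex opposite `F` and `𝒮_F` is the outward normal of `F` with `|𝒮_F| = |F|`. -/
theorem stmt_19 (S : Fin 3 → EuclideanSpace ℝ (Fin 2)) (hS : AffineIndependent ℝ S)
    (lam : Fin 3 → (EuclideanSpace ℝ (Fin 2) →ᵃ[ℝ] ℝ))
    (hlam : ∀ i j : Fin 3, lam i (S j) = if i = j then 1 else 0)
    (n : Fin 3 → EuclideanSpace ℝ (Fin 2))
    (hperp : ∀ m : Fin 3, ⟪n m, S (m + 2) - S (m + 1)⟫ = 0)
    (hunit : ∀ m : Fin 3, ‖n m‖ = 1)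
    (hout : ∀ m : Fin 3, 0 < ⟪n m, S (m + 1) - S m⟫)
    (k : Fin 3) (d' : Fin 2)
    (SF : EuclideanSpace ℝ (Fin 2)) (hSF : SF = ‖S (k + 2) - S (k + 1)‖ • n k)
    (area : ℝ) (harea : area = (volume (convexHull ℝ (Set.range S))).toReal)
    (e : EuclideanSpace ℝ (Fin 2)) (he : e = EuclideanSpace.single d' (1 : ℝ))
    (ψ : EuclideanSpace ℝ (Fin 2) → ℝ) (hψ : ψ = fun x => 1 - 2 * lam k x)
    (R : EuclideanSpace ℝ (Fin 2) → EuclideanSpace ℝ (Fin 2))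
    (hR : R = fun x => ((2 * area)⁻¹ * ⟪SF, e⟫) • (x - S k)) :
    ∀ m : Fin 3,
      ‖S (m + 2) - S (m + 1)‖ *
          ∫ t in (0:ℝ)..1, ⟪R ((1 - t) • S (m + 1) + t • S (m + 2)), n m⟫ =
      ‖S (m + 2) - S (m + 1)‖ *
          ∫ t in (0:ℝ)..1, ψ ((1 - t) • S (m + 1) + t • S (m + 2)) * ⟪e, n m⟫ :=
  stmt_19_general S lam hlam n hperp hunit hout k SF hSF area harea e ψ hψ R hR
end
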